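/- arXiv:1907.06172 — 3 statements merged into one kernel-verified Lean document; each statement's English description precedes it below -/
import Mathlib

section
/- Let G be a graph with partial precoloring p and let H be a set of vertices of G. If there exists a full coloring c extending p such that every vertex of H is happy with respect to c, then there is no path u₁, …, u_t in G with u₁ and u_t precolored by p, p(u₁) ≠ p(u_t), and for each i ∈ [t−1] at least one of u_i, u_{i+1} in H. -/
/-! Every edge of such a path has a happy endpoint, so any coloring making `H` happy is
constant along the path; it would then give its two ends the same color, yet it extends `p`,
which colors them differently. -/

theorem Fin.apply_eq_apply_zero_of_forall_castSucc_eq_succ {α : Type*} {t : ℕ}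
    {f : Fin (t + 1) → α} (h : ∀ i : Fin t, f i.castSucc = f i.succ) (i : Fin (t + 1)) :
    f i = f 0 := by
  induction i using Fin.induction with
  | zero => rfl
  | succ j ih => rw [← h j, ih]

theorem SimpleGraph.eq_of_adj_of_happy {V α : Type*} {G : SimpleGraph V} {H : Set V}
    {c : V → α} (hhappy : ∀ v ∈ H, ∀ w, G.Adj v w → c w = c v) {v w : V} (hvw : G.Adj v w)
    (hH : v ∈ H ∨ w ∈ H) : c v = c w := by
  rcases hH with hv | hw
  · exact (hhappy v hv w hvw).symm
  · exact hhappy w hw v hvw.symm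

/-- If some coloring extending p makes all of H happy, then there is no path between
differently precolored vertices whose every edge has an endpoint in H. -/
theorem stmt_2 {V : Type*} (G : SimpleGraph V) (p : V → Option ℕ) (H : Set V)
    (h : ∃ c : V → ℕ, (∀ v a, p v = some a → c v = a) ∧
      ∀ v ∈ H, ∀ w, G.Adj v w → c w = c v) :
    ¬ ∃ (t : ℕ) (u : Fin (t + 1) → V) (a b : ℕ),
      (∀ i : Fin t, G.Adj (u i.castSucc) (u i.succ)) ∧
      p (u 0) = some a ∧ p (u (Fin.last t)) = some b ∧ a ≠ b ∧
      (∀ i : Fin t, u i.castSucc ∈ H ∨ u i.succ ∈ H) := by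
  rintro ⟨t, u, a, b, hadj, ha, hb, hab, hH⟩
  obtain ⟨c, hext, hhappy⟩ := h
  have hconst : c (u (Fin.last t)) = c (u 0) :=
    Fin.apply_eq_apply_zero_of_forall_castSucc_eq_succ (f := c ∘ u)
      (fun i => G.eq_of_adj_of_happy hhappy (hadj i) (hH i)) _
  exact hab (by rw [← hext _ _ ha, ← hext _ _ hb, hconst])
end

section
/- Let G be a graph with partial precoloring p and let H be a set of vertices of G such that every vertex of H is potentially happy. If there exists no path u₁, …, u_t in G such that u₁ and u_t are precolored, p(u₁) ≠ p(u_t), and for each i ∈ [t−1] at least one of u_i, u_{i+1} lies in H, then there exists a full coloring c extending p with all vertices of H happy with respect to c. -/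
lemma exists_fin_path {V : Type*} (G : SimpleGraph V) (H : Set V) {v w : V}
    (h : Relation.ReflTransGen (fun x y => G.Adj x y ∧ (x ∈ H ∨ y ∈ H)) v w) :
    ∃ (t : ℕ) (u : Fin (t + 1) → V), u 0 = v ∧ u (Fin.last t) = w ∧
      (∀ i : Fin t, G.Adj (u i.castSucc) (u i.succ)) ∧
      (∀ i : Fin t, u i.castSucc ∈ H ∨ u i.succ ∈ H) := by
  induction h with
  | refl => exact ⟨0, fun _ => v, rfl, rfl, fun i => i.elim0, fun i => i.elim0⟩
  | @tail b c hvb hbc ih =>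
    obtain ⟨t, u, hu0, hul, hadj, hH⟩ := ih
    refine ⟨t + 1, Fin.snoc u c, ?_, ?_, ?_, ?_⟩
    · rw [show (0 : Fin (t+2)) = Fin.castSucc 0 by rfl, Fin.snoc_castSucc]; exact hu0
    · simp [Fin.snoc_last]
    · intro i
      rcases eq_or_ne i (Fin.last t) with h | h
      · subst h
        rw [Fin.snoc_castSucc, show (Fin.last t).succ = Fin.last (t+1) by rfl,
          Fin.snoc_last, hul]
        exact hbc.1
      · obtain ⟨j, rfl⟩ := Fin.exists_castSucc_eq.2 h
        rw [Fin.snoc_castSucc, Fin.succ_castSucc, Fin.snoc_castSucc]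
        exact hadj j
    · intro i
      rcases eq_or_ne i (Fin.last t) with h | h
      · subst h
        rw [Fin.snoc_castSucc, show (Fin.last t).succ = Fin.last (t+1) by rfl,
          Fin.snoc_last, hul]
        exact hbc.2
      · obtain ⟨j, rfl⟩ := Fin.exists_castSucc_eq.2 h
        rw [Fin.snoc_castSucc, Fin.succ_castSucc, Fin.snoc_castSucc]
        exact hH j

/-- If every vertex of H is potentially happy and no bad path exists, then some
coloring extending p makes all of H happy. -/
theorem stmt_3 {V : Type*} (G : SimpleGraph V) (p : V → Option ℕ) (H : Set V)
    (hpot : ∀ v ∈ H, ∃ c : V → ℕ, (∀ w a, p w = some a → c w = a) ∧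
      ∀ w, G.Adj v w → c w = c v)
    (hnopath : ¬ ∃ (t : ℕ) (u : Fin (t + 1) → V) (a b : ℕ),
      (∀ i : Fin t, G.Adj (u i.castSucc) (u i.succ)) ∧
      p (u 0) = some a ∧ p (u (Fin.last t)) = some b ∧ a ≠ b ∧
      (∀ i : Fin t, u i.castSucc ∈ H ∨ u i.succ ∈ H)) :
    ∃ c : V → ℕ, (∀ w a, p w = some a → c w = a) ∧
      ∀ v ∈ H, ∀ w, G.Adj v w → c w = c v := by
  classical
  set r : V → V → Prop := fun x y => G.Adj x y ∧ (x ∈ H ∨ y ∈ H) with hr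
  have hsymm : Symmetric r := fun x y h => ⟨h.1.symm, h.2.symm⟩
  set R : V → V → Prop := Relation.ReflTransGen r with hR
  have hRsymm : ∀ {x y}, R x y → R y x := fun h =>
    letI : Std.Symm r := ⟨fun a b h => hsymm h⟩; Std.Symm.symm _ _ h
  -- key: reachable precolored vertices agree
  have key : ∀ {x y a b}, R x y → p x = some a → p y = some b → a = b := by
    intro x y a b hxy hx hy
    by_contra hab
    obtain ⟨t, u, hu0, hul, hadj, hH⟩ := exists_fin_path G H hxy
    exact hnopath ⟨t, u, a, b, hadj, hu0 ▸ hx, hul ▸ hy, hab, hH⟩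
  set c : V → ℕ := fun v =>
    if h : ∃ a, ∃ w, R v w ∧ p w = some a then h.choose else 0 with hc
  have hagree : ∀ w a, p w = some a → c w = a := by
    intro w a hw
    have hex : ∃ a, ∃ w', R w w' ∧ p w' = some a :=
      ⟨a, w, Relation.ReflTransGen.refl, hw⟩
    rw [hc]
    simp only [dif_pos hex]
    obtain ⟨w', hRw, hpw⟩ := hex.choose_spec
    exact (key (hRsymm hRw) hpw hw)
  refine ⟨c, hagree, ?_⟩
  intro v hv w hadj
  have hRvw : R v w := Relation.ReflTransGen.single ⟨hadj, Or.inl hv⟩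
  have hiff : (∃ a, ∃ x, R v x ∧ p x = some a) ↔ (∃ a, ∃ x, R w x ∧ p x = some a) := by
    constructor
    · rintro ⟨a, x, hRx, hpx⟩; exact ⟨a, x, (hRsymm hRvw).trans hRx, hpx⟩
    · rintro ⟨a, x, hRx, hpx⟩; exact ⟨a, x, hRvw.trans hRx, hpx⟩
  by_cases hex : ∃ a, ∃ x, R v x ∧ p x = some a
  · have hexw := hiff.mp hex
    rw [hc]
    simp only [dif_pos hex, dif_pos hexw]
    obtain ⟨x, hRx, hpx⟩ := hex.choose_spec
    obtain ⟨y, hRy, hpy⟩ := hexw.choose_spec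
    exact key ((hRsymm hRy).trans ((hRsymm hRvw).trans hRx)) hpy hpx
  · have hexw := hiff.not.mp hex
    rw [hc]
    simp only [dif_neg hex, dif_neg hexw]
end

section
/- Let G be a graph with partial coloring p and H a set of vertices all happy with respect to a full coloring c extending p. Then every path u₁, …, u_t in G whose every edge is incident to at least one vertex of H induces a path in the square of G restricted to H: the subsequence of vertices of the path lying in H forms a walk in G²[H], where consecutive members of the subsequence are adjacent in G²[H]. -/
/-! Every edge of the path meets `H`, so the path never visits two consecutive vertices outside `H`:
consecutive members of the `H`-subsequence are one or two steps apart along the path, hence adjacent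
in `G` or joined through the single vertex between them. -/

theorem Fin.rel_of_val_eq_add_one {t : ℕ} {R : Fin (t + 1) → Fin (t + 1) → Prop}
    (h : ∀ k : Fin t, R k.castSucc k.succ) {a b : Fin (t + 1)} (hab : (b : ℕ) = a + 1) : R a b := by
  have ha : (a : ℕ) < t := by omega
  have hca : (⟨a, ha⟩ : Fin t).castSucc = a := rfl
  have hsb : (⟨a, ha⟩ : Fin t).succ = b := Fin.ext hab.symm
  simpa only [hca, hsb] using h ⟨a, ha⟩

theorem val_le_add_two_of_notMem_between {V : Type*} {H : Set V} {t : ℕ} {u : Fin (t + 1) → V}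
    (hedge : ∀ k : Fin t, u k.castSucc ∈ H ∨ u k.succ ∈ H) {i j : Fin (t + 1)}
    (hbetween : ∀ k : Fin (t + 1), i < k → k < j → u k ∉ H) : (j : ℕ) ≤ i + 2 := by
  by_contra! hj
  have hnotMem (k : ℕ) (hik : (i : ℕ) < k) (hkj : k < j) : u ⟨k, by omega⟩ ∉ H :=
    hbetween _ (Fin.lt_def.2 hik) (Fin.lt_def.2 hkj)
  rcases Fin.rel_of_val_eq_add_one (R := fun a b => u a ∈ H ∨ u b ∈ H) hedge
      (a := ⟨i + 1, by omega⟩) (b := ⟨i + 2, by omega⟩) rfl with h | h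
  · exact hnotMem (i + 1) (by omega) (by omega) h
  · exact hnotMem (i + 2) (by omega) (by omega) h

theorem stmt_4_general {V : Type*} (G : SimpleGraph V) (H : Set V)
    (t : ℕ) (u : Fin (t + 1) → V) (hinj : Function.Injective u)
    (hadj : ∀ i : Fin t, G.Adj (u i.castSucc) (u i.succ))
    (hedge : ∀ i : Fin t, u i.castSucc ∈ H ∨ u i.succ ∈ H)
    (i j : Fin (t + 1)) (hij : i < j)
    (hbetween : ∀ k : Fin (t + 1), i < k → k < j → u k ∉ H) :
    u i ≠ u j ∧ (G.Adj (u i) (u j) ∨ ∃ w, G.Adj (u i) w ∧ G.Adj w (u j)) := by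
  have hconsec {a b : Fin (t + 1)} : (b : ℕ) = a + 1 → G.Adj (u a) (u b) :=
    Fin.rel_of_val_eq_add_one (R := fun a b => G.Adj (u a) (u b)) hadj
  refine ⟨hinj.ne hij.ne, ?_⟩
  have hgap := val_le_add_two_of_notMem_between hedge hbetween
  rw [Fin.lt_def] at hij
  by_cases hj : (j : ℕ) = i + 1
  · exact Or.inl (hconsec hj)
  · let m : Fin (t + 1) := ⟨i + 1, by omega⟩
    exact Or.inr ⟨u m, hconsec rfl, hconsec (show (j : ℕ) = i + 1 + 1 by omega)⟩

/-- A path whose every edge is incident to H induces a walk in the square of G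
restricted to H: consecutive members of the H-subsequence are adjacent in G²[H]. -/
theorem stmt_4 {V : Type*} (G : SimpleGraph V) (p : V → Option ℕ) (c : V → ℕ) (H : Set V)
    (hext : ∀ v a, p v = some a → c v = a)
    (hH : ∀ v ∈ H, ∀ w, G.Adj v w → c w = c v)
    (t : ℕ) (u : Fin (t + 1) → V) (hinj : Function.Injective u)
    (hadj : ∀ i : Fin t, G.Adj (u i.castSucc) (u i.succ))
    (hedge : ∀ i : Fin t, u i.castSucc ∈ H ∨ u i.succ ∈ H)
    (i j : Fin (t + 1)) (hij : i < j) (hiH : u i ∈ H) (hjH : u j ∈ H)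
    (hbetween : ∀ k : Fin (t + 1), i < k → k < j → u k ∉ H) :
    u i ≠ u j ∧ (G.Adj (u i) (u j) ∨ ∃ w, G.Adj (u i) w ∧ G.Adj w (u j)) :=
  stmt_4_general G H t u hinj hadj hedge i j hij hbetween
end
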